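/- arXiv:2505.23089 — 3 statements merged into one kernel-verified Lean document; each statement's English description precedes it below -/
import Mathlib

section
/- Let (X, G) be a CR-dynamical system such that G ⊆ G² ⊆ G³ ⊆ ⋯. Then (X, G) has the (1,2)-shadowing property if and only if (X, Gᵏ) has the (1,2)-shadowing property for every integer k ≥ 1. -/
open Set Filter Topology

/-- The n-fold relational composition of `G` (with `G⁰` the diagonal). -/
def relPow {X : Type*} (G : Set (X × X)) : ℕ → Set (X × X)
  | 0 => Set.diagonal X
  | n + 1 => {p : X × X | ∃ z : X, (p.1, z) ∈ relPow G n ∧ (z, p.2) ∈ G}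

/-- `s` is a trajectory of `x` in `(X, G)`. -/
def IsTrajectory {X : Type*} (G : Set (X × X)) (x : X) (s : ℕ → X) : Prop :=
  s 0 = x ∧ ∀ n : ℕ, (s n, s (n + 1)) ∈ G

/-- `x` is a legal point of `(X, G)`. -/
def IsLegal {X : Type*} (G : Set (X × X)) (x : X) : Prop :=
  ∃ s : ℕ → X, IsTrajectory G x s

/-- The set of non-degenerate points of `(X, G)`. -/
def ndDom {X : Type*} (G : Set (X × X)) : Set X := {x : X | ∃ y : X, (x, y) ∈ G}

/-- An entourage of the unique compatible uniformity on a compact Hausdorff space: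
a neighbourhood of the diagonal in `X × X`. -/
def IsEntourage {X : Type*} [TopologicalSpace X] (U : Set (X × X)) : Prop :=
  U ∈ 𝓝ˢ (Set.diagonal X)

/-- `(V,1)`-pseudo-orbit. -/
def IsPO1 {X : Type*} (G V : Set (X × X)) (x : ℕ → X) : Prop :=
  (∀ n : ℕ, x n ∈ ndDom G) ∧ ∀ n : ℕ, ∀ y : X, (x n, y) ∈ G → (y, x (n + 1)) ∈ V

/-- `(V,2)`-pseudo-orbit. -/
def IsPO2 {X : Type*} (G V : Set (X × X)) (x : ℕ → X) : Prop :=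
  (∀ n : ℕ, x n ∈ ndDom G) ∧ ∀ n : ℕ, ∃ y : X, (x n, y) ∈ G ∧ (y, x (n + 1)) ∈ V

/-- The legal point `y` `(U,1)`-shadows the sequence `x`. -/
def Shadows1 {X : Type*} (G U : Set (X × X)) (y : X) (x : ℕ → X) : Prop :=
  IsLegal G y ∧ ∀ s : ℕ → X, IsTrajectory G y s → ∀ n : ℕ, (s n, x n) ∈ U

/-- The point `y` `(U,2)`-shadows the sequence `x`. -/
def Shadows2 {X : Type*} (G U : Set (X × X)) (y : X) (x : ℕ → X) : Prop :=
  ∃ s : ℕ → X, IsTrajectory G y s ∧ ∀ n : ℕ, (s n, x n) ∈ U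

/-- The `(1,1)`-shadowing property. -/
def Shadowing11 {X : Type*} [TopologicalSpace X] (G : Set (X × X)) : Prop :=
  ∀ U : Set (X × X), IsEntourage U → ∃ V : Set (X × X), IsEntourage V ∧
    ∀ x : ℕ → X, IsPO1 G V x → ∃ y : X, Shadows1 G U y x

/-- The `(1,2)`-shadowing property. -/
def Shadowing12 {X : Type*} [TopologicalSpace X] (G : Set (X × X)) : Prop :=
  ∀ U : Set (X × X), IsEntourage U → ∃ V : Set (X × X), IsEntourage V ∧
    ∀ x : ℕ → X, IsPO1 G V x → ∃ y : X, Shadows2 G U y x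

/-- The `(2,1)`-shadowing property. -/
def Shadowing21 {X : Type*} [TopologicalSpace X] (G : Set (X × X)) : Prop :=
  ∀ U : Set (X × X), IsEntourage U → ∃ V : Set (X × X), IsEntourage V ∧
    ∀ x : ℕ → X, IsPO2 G V x → ∃ y : X, Shadows1 G U y x

/-- The `(2,2)`-shadowing property. -/
def Shadowing22 {X : Type*} [TopologicalSpace X] (G : Set (X × X)) : Prop :=
  ∀ U : Set (X × X), IsEntourage U → ∃ V : Set (X × X), IsEntourage V ∧
    ∀ x : ℕ → X, IsPO2 G V x → ∃ y : X, Shadows2 G U y x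

/-! Enlarging a relation without enlarging its set of non-degenerate points turns
`(V,1)`-pseudo-orbits of the larger relation into `(V,1)`-pseudo-orbits of the smaller one,
and trajectories of the smaller relation into trajectories of the larger one; so
`(1,2)`-shadowing passes upwards. Under `G ⊆ G² ⊆ G³ ⊆ ⋯` this applies to `G ⊆ Gᵏ`. -/

lemma relPow_one {X : Type*} (G : Set (X × X)) : relPow G 1 = G := by
  ext ⟨a, b⟩
  simp [relPow]

lemma subset_relPow_of_chain {X : Type*} {G : Set (X × X)}
    (hchain : ∀ k : ℕ, 1 ≤ k → relPow G k ⊆ relPow G (k + 1)) {k : ℕ} (hk : 1 ≤ k) :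
    G ⊆ relPow G k := by
  induction k, hk using Nat.le_induction with
  | base => rw [relPow_one]
  | succ n hn ih => exact ih.trans (hchain n hn)

lemma ndDom_relPow_subset {X : Type*} (G : Set (X × X)) {n : ℕ} (hn : 1 ≤ n) :
    ndDom (relPow G n) ⊆ ndDom G := by
  induction n, hn using Nat.le_induction with
  | base => rw [relPow_one]
  | succ m hm ih =>
    rintro x ⟨y, z, hxz, -⟩
    exact ih ⟨z, hxz⟩

lemma IsTrajectory.mono {X : Type*} {G H : Set (X × X)} {y : X} {s : ℕ → X}
    (hs : IsTrajectory G y s) (hGH : G ⊆ H) : IsTrajectory H y s :=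
  ⟨hs.1, fun n => hGH (hs.2 n)⟩

lemma Shadows2.mono {X : Type*} {G H U : Set (X × X)} {y : X} {x : ℕ → X}
    (h : Shadows2 G U y x) (hGH : G ⊆ H) : Shadows2 H U y x :=
  let ⟨s, hs, hsU⟩ := h
  ⟨s, hs.mono hGH, hsU⟩

lemma IsPO1.of_superset {X : Type*} {G H V : Set (X × X)} {x : ℕ → X}
    (hx : IsPO1 H V x) (hGH : G ⊆ H) (hdom : ndDom H ⊆ ndDom G) : IsPO1 G V x :=
  ⟨fun n => hdom (hx.1 n), fun n y hy => hx.2 n y (hGH hy)⟩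

lemma Shadowing12.of_subset {X : Type*} [TopologicalSpace X] {G H : Set (X × X)}
    (hG : Shadowing12 G) (hGH : G ⊆ H) (hdom : ndDom H ⊆ ndDom G) : Shadowing12 H := by
  intro U hU
  obtain ⟨V, hV, hshadow⟩ := hG U hU
  refine ⟨V, hV, fun x hx => ?_⟩
  obtain ⟨y, hy⟩ := hshadow x (hx.of_superset hGH hdom)
  exact ⟨y, hy.mono hGH⟩

theorem stmt_7_general {X : Type*} [TopologicalSpace X]
    (G : Set (X × X))
    (hchain : ∀ k : ℕ, 1 ≤ k → relPow G k ⊆ relPow G (k + 1)) :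
    Shadowing12 G ↔ ∀ k : ℕ, 1 ≤ k → Shadowing12 (relPow G k) := by
  refine ⟨fun hG k hk => ?_, fun h => ?_⟩
  · exact hG.of_subset (subset_relPow_of_chain hchain hk) (ndDom_relPow_subset G hk)
  · simpa only [relPow_one] using h 1 le_rfl

/-- if G ⊆ G² ⊆ G³ ⊆ ⋯ then (X,G) has the (1,2)-shadowing property
iff (X,Gᵏ) does for all k ≥ 1. -/
theorem stmt_7 {X : Type*} [TopologicalSpace X] [CompactSpace X] [T2Space X] [Nonempty X]
    (G : Set (X × X)) (hGclosed : IsClosed G) (hGne : G.Nonempty)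
    (hGpow : ∀ n : ℕ, 1 ≤ n → (relPow G n).Nonempty)
    (hchain : ∀ k : ℕ, 1 ≤ k → relPow G k ⊆ relPow G (k + 1)) :
    Shadowing12 G ↔ ∀ k : ℕ, 1 ≤ k → Shadowing12 (relPow G k) :=
  stmt_7_general G hchain
end

section
/- Suppose (X, G) is a CR-dynamical system. If X is totally disconnected, and there exists a positive integer n such that for each x ∈ X there is a unique finite sequence (x₀, x₁, …, xₙ) with (xₖ, xₖ₊₁) ∈ G for each 0 ≤ k < n and x₀ = xₙ = x, then (X, G) has the (1,2)-shadowing property. -/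
/-!
Uniqueness of the closed `G`-chains of length `n` forces them to be the orbits of a single map
`f`, sending `x` to the second point of its chain; thus `(x, f x) ∈ G` and `f^[n] = id`. The map
sending `x` to its periodic trajectory has closed graph and compact codomain `ℕ → X`, so it is
continuous, and hence so is `f`.

A continuous periodic map of a compact totally disconnected space has shadowing: a finite clopen
cover subordinate to `U` defines an open equivalence relation `W ⊆ U`, and the intersection `V` of
the pullbacks of `W` under the finitely many iterates of `f` is an open `f`-invariant equivalence
relation. By induction the `f`-orbit of `x 0` stays `V`-close to every `V`-pseudo-orbit of `f`.
Every `(V,1)`-pseudo-orbit of `G` is one of `f`, and `f`-orbits are `G`-trajectories.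
-/

open Set Filter Topology

open Function
open scoped SetRel

section

variable {X : Type*}

def IsClosedChain (G : Set (X × X)) (n : ℕ) (x : X) (c : Fin (n + 1) → X) : Prop :=
  c 0 = x ∧ c (Fin.last n) = x ∧ ∀ i : Fin n, (c i.castSucc, c i.succ) ∈ G

theorem IsTrajectory.isClosedChain {G : Set (X × X)} {x : X} {s : ℕ → X} {n : ℕ}
    (hs : IsTrajectory G x s) (hper : s.Periodic n) : IsClosedChain G n x (fun i => s i) :=
  ⟨hs.1, by simpa [hper.eq] using hs.1, fun i => by simpa using hs.2 i⟩

theorem IsClosedChain.isTrajectory_periodic {G : Set (X × X)} {x : X} {n : ℕ}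
    {c : Fin (n + 1) → X} (hn : 0 < n) (hc : IsClosedChain G n x c) :
    IsTrajectory G x (fun k => c (Fin.castSucc ⟨k % n, Nat.mod_lt k hn⟩)) ∧
      (fun k => c (Fin.castSucc ⟨k % n, Nat.mod_lt k hn⟩)).Periodic n := by
  obtain ⟨hc0, hclast, hedge⟩ := hc
  -- indices `0` and `n` both carry `x`, so the chain wraps around
  have hwrap : ∀ r (hr : r < n),
      c (Fin.castSucc ⟨(r + 1) % n, Nat.mod_lt _ hn⟩) = c (Fin.succ ⟨r, hr⟩) := by
    intro r hr
    rcases (Nat.succ_le_of_lt hr).lt_or_eq with hlt | heq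
    · congr 1
      ext
      simp [Nat.mod_eq_of_lt hlt]
    · subst heq
      have h0 : (Fin.castSucc ⟨(r + 1) % (r + 1), Nat.mod_lt _ hn⟩ : Fin (r + 2)) = 0 := by
        ext
        simp
      have hlast : Fin.succ ⟨r, hr⟩ = Fin.last (r + 1) := rfl
      rw [h0, hlast, hc0, hclast]
  refine ⟨⟨by simpa using hc0, fun k => ?_⟩, fun k => by simp⟩
  have hk := hwrap (k % n) (Nat.mod_lt k hn)
  simp only [Nat.mod_add_mod] at hk
  dsimp only
  rw [hk]
  exact hedge _

theorem existsUnique_periodic_trajectory {G : Set (X × X)} {n : ℕ} (hn : 0 < n)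
    (h : ∀ x, ∃! c, IsClosedChain G n x c) (x : X) :
    ∃! s : ℕ → X, IsTrajectory G x s ∧ s.Periodic n := by
  obtain ⟨c, hc, -⟩ := h x
  refine ⟨_, hc.isTrajectory_periodic hn, fun s hs => funext fun k => ?_⟩
  have hsc : (fun i : Fin (n + 1) => s i) = c := (h x).unique (hs.1.isClosedChain hs.2) hc
  rw [← hs.2.map_mod_nat k, ← hsc]
  rfl

theorem continuous_of_isClosed_graph {Y : Type*} [TopologicalSpace X] [TopologicalSpace Y]
    [CompactSpace Y] {f : X → Y} (hf : IsClosed (graph f)) : Continuous f := by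
  refine continuous_iff_isClosed.2 fun C hC => ?_
  have : f ⁻¹' C = Prod.fst '' (graph f ∩ univ ×ˢ C) := by
    ext x
    simp [graph]
  rw [this]
  exact isClosedMap_fst_of_compactSpace _ (hf.inter (isClosed_univ.prod hC))

theorem isClosed_setOf_periodic_trajectory [TopologicalSpace X] [T2Space X]
    {G : Set (X × X)} (hG : IsClosed G) (n : ℕ) :
    IsClosed {p : X × (ℕ → X) | IsTrajectory G p.1 p.2 ∧ p.2.Periodic n} := by
  simp only [IsTrajectory, Periodic, ofPred_and, ofPred_forall]
  exact ((isClosed_eq (by fun_prop) (by fun_prop)).inter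
    (isClosed_iInter fun k => hG.preimage (by fun_prop))).inter
    (isClosed_iInter fun k => isClosed_eq (by fun_prop) (by fun_prop))

/-- The selection sends each point to the next point of its unique periodic trajectory. -/
theorem exists_continuous_selection_iterate_eq_id [TopologicalSpace X] [CompactSpace X]
    [T2Space X] {G : Set (X × X)} (hG : IsClosed G) {n : ℕ}
    (h : ∀ x, ∃! s : ℕ → X, IsTrajectory G x s ∧ s.Periodic n) :
    ∃ f : X → X, Continuous f ∧ f^[n] = id ∧ ∀ x, (x, f x) ∈ G := by
  choose s hs using fun x => (h x).exists
  have hs_cont : Continuous s := continuous_of_isClosed_graph <| by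
    convert isClosed_setOf_periodic_trajectory hG n using 1
    ext ⟨x, t⟩
    exact ⟨fun hxt => hxt ▸ hs x, fun ht => (h x).unique (hs x) ht⟩
  set f : X → X := fun x => s x 1
  have hshift : ∀ x, s (f x) = fun k => s x (k + 1) := fun x =>
    (h (f x)).unique (hs (f x)) ⟨⟨rfl, fun k => (hs x).1.2 (k + 1)⟩, (hs x).2.add_const 1⟩
  have hiterate : ∀ k x, f^[k] x = s x k := by
    intro k
    induction k with
    | zero => exact fun x => (hs x).1.1.symm
    | succ k ih => intro x; rw [iterate_succ_apply, ih, hshift]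
  refine ⟨f, (continuous_apply 1).comp hs_cont, funext fun x => ?_, fun x => ?_⟩
  · rw [hiterate, (hs x).2.eq, (hs x).1.1, id]
  · simpa [(hs x).1.1] using (hs x).1.2 0

theorem exists_isOpen_isRefl_isTrans_subset [TopologicalSpace X] [CompactSpace X] [T2Space X]
    [TotallyDisconnectedSpace X] {U : SetRel X X} (hU : U ∈ 𝓝ˢ (diagonal X)) :
    ∃ W : SetRel X X, IsOpen W ∧ W.IsRefl ∧ W.IsTrans ∧ W ⊆ U := by
  have hK : ∀ x : X, ∃ K : Set X, IsClopen K ∧ x ∈ K ∧ K ×ˢ K ⊆ U := fun x => by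
    obtain ⟨u, hu, v, hv, huv⟩ := mem_nhds_prod_iff.1 (mem_nhdsSet_iff_forall.1 hU (x, x) rfl)
    obtain ⟨K, hK, hxK, hKuv⟩ := isTopologicalBasis_isClopen.mem_nhds_iff.1 (inter_mem hu hv)
    exact ⟨K, hK, hxK, fun p hp => huv ⟨(hKuv hp.1).1, (hKuv hp.2).2⟩⟩
  choose K hKc hxK hKU using hK
  obtain ⟨T, hT⟩ := isCompact_univ.elim_finite_subcover K (fun x => (hKc x).isOpen)
    (fun x _ => mem_iUnion.2 ⟨x, hxK x⟩)
  let φ : X → T → Bool := fun x i => (K i).boolIndicator x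
  have hφ : Continuous φ :=
    continuous_pi fun i => (continuous_boolIndicator_iff_isClopen _).2 (hKc i)
  refine ⟨{p | φ p.1 = φ p.2}, (isOpen_discrete (diagonal _)).preimage (hφ.prodMap hφ),
    ⟨fun _ => rfl⟩, ⟨fun _ _ _ => Eq.trans⟩, fun ⟨a, b⟩ hab => ?_⟩
  obtain ⟨i, hiT, hai⟩ := mem_iUnion₂.1 (hT (mem_univ a))
  have hbi : b ∈ K i := by
    have hab' : (K i).boolIndicator a = (K i).boolIndicator b :=
      congrFun (hab : φ a = φ b) ⟨i, hiT⟩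
    rw [mem_iff_boolIndicator, ← hab', ← mem_iff_boolIndicator]
    exact hai
  exact hKU i ⟨hai, hbi⟩

theorem exists_isOpen_isRefl_isTrans_invariant_subset [TopologicalSpace X] {f : X → X}
    (hf : Continuous f) {n : ℕ} (hn : 0 < n) (hfn : f^[n] = id) {W : SetRel X X}
    (hW : IsOpen W) [W.IsRefl] [W.IsTrans] :
    ∃ V : SetRel X X, IsOpen V ∧ V.IsRefl ∧ V.IsTrans ∧ V ⊆ W ∧ V ⊆ Prod.map f f ⁻¹' V := by
  have hfinite : ⋂ k, Prod.map f^[k] f^[k] ⁻¹' W =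
      ⋂ k ∈ Finset.range n, Prod.map f^[k] f^[k] ⁻¹' W := by
    refine Subset.antisymm (fun p hp => mem_iInter₂.2 fun k _ => mem_iInter.1 hp k)
      fun p hp => mem_iInter.2 fun k => ?_
    have hper : ∀ x, IsPeriodicPt f n x := fun x => congrFun hfn x
    rw [mem_preimage, Prod.map_apply, ← (hper p.1).iterate_mod_apply,
      ← (hper p.2).iterate_mod_apply]
    exact mem_iInter₂.1 hp (k % n) (Finset.mem_range.2 (Nat.mod_lt k hn))
  refine ⟨⋂ k, Prod.map f^[k] f^[k] ⁻¹' W, ?_, inferInstance, inferInstance,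
    fun p hp => mem_iInter.1 hp 0, fun p hp => mem_iInter.2 fun k => ?_⟩
  · rw [hfinite]
    exact isOpen_biInter_finset fun k _ => hW.preimage ((hf.iterate k).prodMap (hf.iterate k))
  · show (f^[k] (f p.1), f^[k] (f p.2)) ∈ W
    rw [← iterate_succ_apply, ← iterate_succ_apply]
    exact mem_iInter.1 hp (k + 1)

theorem orbit_rel_of_pseudoOrbit {f : X → X} {V : SetRel X X} [V.IsRefl] [V.IsTrans]
    (hV : V ⊆ Prod.map f f ⁻¹' V) {x : ℕ → X} (hx : ∀ k, f (x k) ~[V] x (k + 1)) :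
    ∀ k, f^[k] (x 0) ~[V] x k
  | 0 => V.rfl
  | k + 1 => by
    rw [iterate_succ_apply']
    exact V.trans (hV (orbit_rel_of_pseudoOrbit hV hx k)) (hx k)

theorem exists_mem_nhdsSet_orbit_shadows [TopologicalSpace X] [CompactSpace X] [T2Space X]
    [TotallyDisconnectedSpace X] {f : X → X} (hf : Continuous f) {n : ℕ} (hn : 0 < n)
    (hfn : f^[n] = id) {U : SetRel X X} (hU : U ∈ 𝓝ˢ (diagonal X)) :
    ∃ V ∈ 𝓝ˢ (diagonal X), ∀ x : ℕ → X, (∀ k, f (x k) ~[V] x (k + 1)) →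
      ∀ k, f^[k] (x 0) ~[U] x k := by
  obtain ⟨W, hWo, hWr, hWt, hWU⟩ := exists_isOpen_isRefl_isTrans_subset hU
  obtain ⟨V, hVo, hVr, hVt, hVW, hVf⟩ :=
    exists_isOpen_isRefl_isTrans_invariant_subset hf hn hfn hWo
  refine ⟨V, hVo.mem_nhdsSet.2 ?_, fun x hx k => hWU (hVW (orbit_rel_of_pseudoOrbit hVf hx k))⟩
  rintro ⟨a, b⟩ (rfl : a = b)
  exact V.rfl

end

theorem stmt_15_general {X : Type*} [TopologicalSpace X] [CompactSpace X] [T2Space X]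
    (G : Set (X × X)) (hGclosed : IsClosed G)
    (hX : TotallyDisconnectedSpace X)
    (n : ℕ) (hn : 1 ≤ n)
    (huniq : ∀ x : X, ∃! c : Fin (n + 1) → X,
      c 0 = x ∧ c (Fin.last n) = x ∧ ∀ i : Fin n, (c i.castSucc, c i.succ) ∈ G) :
    Shadowing12 G := by
  obtain ⟨f, hf, hfn, hfG⟩ := exists_continuous_selection_iterate_eq_id hGclosed
    (existsUnique_periodic_trajectory hn huniq)
  intro U hU
  obtain ⟨V, hV, hshadow⟩ := exists_mem_nhdsSet_orbit_shadows hf hn hfn hU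
  refine ⟨V, hV, fun x hx => ⟨x 0, fun k => f^[k] (x 0), ⟨rfl, fun k => ?_⟩,
    hshadow x fun k => hx.2 k _ (hfG _)⟩⟩
  show (f^[k] (x 0), f^[k + 1] (x 0)) ∈ G
  rw [iterate_succ_apply']
  exact hfG _

/-- if X is totally disconnected and there is a positive n so that
each x has a unique G-chain (x₀,…,xₙ) with x₀ = xₙ = x, then (X,G) has the
(1,2)-shadowing property. -/
theorem stmt_15 {X : Type*} [TopologicalSpace X] [CompactSpace X] [T2Space X] [Nonempty X]
    (G : Set (X × X)) (hGclosed : IsClosed G) (hGne : G.Nonempty)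
    (hGpow : ∀ n : ℕ, 1 ≤ n → (relPow G n).Nonempty)
    (hX : TotallyDisconnectedSpace X)
    (n : ℕ) (hn : 1 ≤ n)
    (huniq : ∀ x : X, ∃! c : Fin (n + 1) → X,
      c 0 = x ∧ c (Fin.last n) = x ∧ ∀ i : Fin n, (c i.castSucc, c i.succ) ∈ G) :
    Shadowing12 G :=
  stmt_15_general G hGclosed hX n hn huniq
end

section
/- Suppose (X, G) is a CR-dynamical system on a non-empty compact metric space (X, d), and suppose there exists an isometry f : X → X with {(x, f(x)) : x ∈ X} ⊆ G. Then: (1) if (X, G) has the (2,1)-shadowing property, then X is totally disconnected; (2) if X is totally disconnected, then (X, G) has the (1,2)-shadowing property. -/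
/-!
An isometry `f` whose graph lies in `G` supplies, through every point `y`, the trajectory
`fⁿ y`, and `fⁿ` preserves distances. If `a ≠ b` lie in a connected set, a `δ`-chain
`c₀ = a, …, c_k = b` (extended constantly) gives the `(δ,2)`-pseudo-orbit `fⁿ cₙ`; a point `y`
shadowing it along `fⁿ y` is `ε`-close both to `a` and, since `f^k` is an isometry, to `b`,
which fails for `ε = d(a,b)/2`.

Conversely, an isometry of a compact space is onto, so a `(δ,1)`-pseudo-orbit `xₙ` can be pulled
back to `wₙ` with `fⁿ wₙ = xₙ` and `d(wₙ₊₁, wₙ) = d(xₙ₊₁, f xₙ) ≤ δ`. In a compact totally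
disconnected space there are finitely many small clopen sets, each containing its own
`γ`-neighbourhood for a common `γ`; the pulled-back chain cannot leave the one containing `x₀`,
so `x₀` shadows `xₙ` along `fⁿ x₀`.
-/

open Set

/-- `(δ,1)`-pseudo-orbit. -/
def MPO1 {X : Type*} [MetricSpace X] (G : Set (X × X)) (δ : ℝ) (x : ℕ → X) : Prop :=
  (∀ n : ℕ, x n ∈ ndDom G) ∧ ∀ n : ℕ, ∀ y : X, (x n, y) ∈ G → dist y (x (n + 1)) ≤ δ

/-- `(δ,2)`-pseudo-orbit. -/
def MPO2 {X : Type*} [MetricSpace X] (G : Set (X × X)) (δ : ℝ) (x : ℕ → X) : Prop :=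
  (∀ n : ℕ, x n ∈ ndDom G) ∧ ∀ n : ℕ, ∃ y : X, (x n, y) ∈ G ∧ dist y (x (n + 1)) ≤ δ

/-- The legal point `y` `(ε,1)`-shadows the sequence `x`. -/
def MShadows1 {X : Type*} [MetricSpace X] (G : Set (X × X)) (ε : ℝ) (y : X) (x : ℕ → X) : Prop :=
  IsLegal G y ∧ ∀ s : ℕ → X, IsTrajectory G y s → ∀ n : ℕ, dist (x n) (s n) < ε

/-- The point `y` `(ε,2)`-shadows the sequence `x`. -/
def MShadows2 {X : Type*} [MetricSpace X] (G : Set (X × X)) (ε : ℝ) (y : X) (x : ℕ → X) : Prop :=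
  ∃ s : ℕ → X, IsTrajectory G y s ∧ ∀ n : ℕ, dist (x n) (s n) < ε

/-- The `(2,1)`-shadowing property (metric form). -/
def MShadowing21 {X : Type*} [MetricSpace X] (G : Set (X × X)) : Prop :=
  ∀ ε : ℝ, 0 < ε → ∃ δ : ℝ, 0 < δ ∧
    ∀ x : ℕ → X, MPO2 G δ x → ∃ y : X, MShadows1 G ε y x

/-- The `(1,2)`-shadowing property (metric form). -/
def MShadowing12 {X : Type*} [MetricSpace X] (G : Set (X × X)) : Prop :=
  ∀ ε : ℝ, 0 < ε → ∃ δ : ℝ, 0 < δ ∧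
    ∀ x : ℕ → X, MPO1 G δ x → ∃ y : X, MShadows2 G ε y x

open Metric Filter Topology

section Isometry

variable {X : Type*} [PseudoMetricSpace X] {f : X → X}

theorem Isometry.iterate (hf : Isometry f) : ∀ n : ℕ, Isometry f^[n]
  | 0 => isometry_id
  | n + 1 => (hf.iterate n).comp hf

theorem Isometry.exists_iterate_dist_lt [CompactSpace X] (hf : Isometry f) (x : X) {r : ℝ}
    (hr : 0 < r) : ∃ n, 0 < n ∧ dist (f^[n] x) x < r := by
  obtain ⟨_, φ, hφ, hlim⟩ := CompactSpace.tendsto_subseq fun n => f^[n] x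
  obtain ⟨N, hN⟩ := Metric.cauchySeq_iff'.1 hlim.cauchySeq r hr
  have hlt : φ N < φ (N + 1) := hφ (Nat.lt_succ_self N)
  refine ⟨φ (N + 1) - φ N, Nat.sub_pos_of_lt hlt, ?_⟩
  have hsplit : f^[φ N] (f^[φ (N + 1) - φ N] x) = f^[φ (N + 1)] x := by
    rw [← Function.iterate_add_apply, Nat.add_sub_cancel' hlt.le]
  rw [← (hf.iterate (φ N)).dist_eq, hsplit]
  exact hN (N + 1) N.le_succ

end Isometry

theorem Isometry.surjective_of_compactSpace {X : Type*} [MetricSpace X] [CompactSpace X]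
    {f : X → X} (hf : Isometry f) : Function.Surjective f := by
  intro x
  have hclosed : IsClosed (range f) := (isCompact_range hf.continuous).isClosed
  suffices x ∈ closure (range f) by rwa [hclosed.closure_eq] at this
  refine Metric.mem_closure_iff.2 fun r hr => ?_
  obtain ⟨_ | n, hn, hdist⟩ := hf.exists_iterate_dist_lt x hr
  · exact absurd hn (lt_irrefl 0)
  · exact ⟨f^[n + 1] x, by rw [Function.iterate_succ_apply']; exact mem_range_self _,
      by rwa [dist_comm]⟩

theorem Relation.ReflTransGen.exists_seq {α : Type*} {r : α → α → Prop} (hr : ∀ a, r a a)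
    {a b : α} (h : ReflTransGen r a b) :
    ∃ (c : ℕ → α) (k : ℕ), c 0 = a ∧ c k = b ∧ ∀ n, r (c n) (c (n + 1)) := by
  induction h using Relation.ReflTransGen.head_induction_on with
  | refl => exact ⟨fun _ => b, 0, rfl, rfl, fun _ => hr b⟩
  | @head a m ham _ ih =>
    obtain ⟨c, k, hc0, hck, hc⟩ := ih
    refine ⟨fun n => Nat.casesOn n a c, k + 1, rfl, hck, fun n => ?_⟩
    cases n with
    | zero => simpa [hc0] using ham
    | succ n => exact hc n

theorem IsPreconnected.reflTransGen_dist_le {X : Type*} [PseudoMetricSpace X] {s : Set X}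
    (hs : IsPreconnected s) {δ : ℝ} (hδ : 0 < δ) {a b : X} (ha : a ∈ s) (hb : b ∈ s) :
    Relation.ReflTransGen (fun p q => dist p q ≤ δ) a b := by
  refine hs.induction₂' _ (fun x _ => ?_) (fun _ _ _ _ _ _ => Relation.ReflTransGen.trans) ha hb
  filter_upwards [mem_nhdsWithin_of_mem_nhds (ball_mem_nhds x hδ)] with y hy
  have hxy : dist y x ≤ δ := (mem_ball.1 hy).le
  exact ⟨.single (by rwa [dist_comm]), .single hxy⟩

theorem exists_pos_forall_exists_thickening_subset_self {X : Type*} [MetricSpace X]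
    [CompactSpace X] [TotallyDisconnectedSpace X] {ε : ℝ} (hε : 0 < ε) :
    ∃ γ > 0, ∀ x : X, ∃ U : Set X, x ∈ U ∧ U ⊆ ball x ε ∧ thickening γ U ⊆ U := by
  choose V hVclopen hxV hVball using fun x : X =>
    compact_exists_isClopen_in_isOpen isOpen_ball (mem_ball_self (x := x) (half_pos hε))
  obtain ⟨t, ht⟩ := isCompact_univ.elim_finite_subcover V (fun x => (hVclopen x).isOpen)
    fun x _ => mem_iUnion.2 ⟨x, hxV x⟩
  have hγev : ∀ᶠ γ in 𝓝[>] (0 : ℝ), 0 < γ ∧ ∀ c ∈ t, thickening γ (V c) ⊆ V c := by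
    refine eventually_mem_nhdsWithin.and ((eventually_all_finset t).2 fun c _ => ?_)
    obtain ⟨δ, hδ, hsub⟩ := (hVclopen c).isClosed.isCompact.exists_thickening_subset_open
      (hVclopen c).isOpen subset_rfl
    filter_upwards [Ioo_mem_nhdsGT hδ] with γ hγ
    exact (thickening_mono hγ.2.le _).trans hsub
  obtain ⟨γ, hγpos, hγ⟩ := hγev.exists
  refine ⟨γ, hγpos, fun x => ?_⟩
  obtain ⟨c, hct, hxc⟩ := mem_iUnion₂.1 (ht (mem_univ x))
  refine ⟨V c, hxc, fun y hy => ?_, hγ c hct⟩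
  have hy' := mem_ball.1 (hVball c hy)
  have hx' := mem_ball.1 (hVball c hxc)
  exact mem_ball.2 (by linarith [dist_triangle_right y x c])

theorem isTrajectory_iterate {X : Type*} {G : Set (X × X)} {f : X → X}
    (hfG : ∀ x, (x, f x) ∈ G) (y : X) : IsTrajectory G y fun n => f^[n] y :=
  ⟨rfl, fun n => by simpa only [Function.iterate_succ_apply'] using hfG (f^[n] y)⟩

section GraphOfIsometry

variable {X : Type*} [MetricSpace X] {G : Set (X × X)} {f : X → X}

theorem mpo2_iterate_of_dist_le (hf : Isometry f) (hfG : ∀ x, (x, f x) ∈ G) {δ : ℝ}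
    {c : ℕ → X} (hc : ∀ n, dist (c n) (c (n + 1)) ≤ δ) : MPO2 G δ fun n => f^[n] (c n) := by
  refine ⟨fun n => ⟨_, hfG _⟩, fun n => ⟨_, hfG _, ?_⟩⟩
  rw [← Function.iterate_succ_apply' f n, (hf.iterate (n + 1)).dist_eq]
  exact hc n

theorem totallyDisconnectedSpace_of_mShadowing21 (hf : Isometry f) (hfG : ∀ x, (x, f x) ∈ G)
    (hsh : MShadowing21 G) : TotallyDisconnectedSpace X := by
  refine ⟨fun t _ ht a ha b hb => ?_⟩
  by_contra hab
  have hε : 0 < dist a b / 2 := half_pos (dist_pos.2 hab)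
  obtain ⟨δ, hδ, hshadow⟩ := hsh _ hε
  obtain ⟨c, k, hc0, hck, hc⟩ :=
    (ht.reflTransGen_dist_le hδ ha hb).exists_seq fun p => by simpa using hδ.le
  obtain ⟨y, -, hy⟩ := hshadow _ (mpo2_iterate_of_dist_le hf hfG hc)
  have hay : dist a y < dist a b / 2 := by
    simpa [hc0] using hy _ (isTrajectory_iterate hfG y) 0
  have hby : dist b y < dist a b / 2 := by
    simpa [hck, (hf.iterate k).dist_eq] using hy _ (isTrajectory_iterate hfG y) k
  linarith [dist_triangle_right a b y]

theorem mShadowing12_of_totallyDisconnectedSpace [CompactSpace X] [TotallyDisconnectedSpace X]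
    (hf : Isometry f) (hfG : ∀ x, (x, f x) ∈ G) : MShadowing12 G := by
  intro ε hε
  obtain ⟨γ, hγ, hU⟩ := exists_pos_forall_exists_thickening_subset_self (X := X) hε
  refine ⟨γ / 2, half_pos hγ, fun x hx => ?_⟩
  obtain ⟨U, hx0U, hUε, hUγ⟩ := hU (x 0)
  choose w hw using fun n => hf.surjective_of_compactSpace.iterate n (x n)
  have hstep : ∀ n, dist (w (n + 1)) (w n) < γ := fun n => by
    rw [← (hf.iterate (n + 1)).dist_eq, hw, Function.iterate_succ_apply', hw, dist_comm]
    linarith [hx.2 n _ (hfG (x n))]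
  have hwU : ∀ n, w n ∈ U := fun n => by
    induction n with
    | zero => simpa [← hw 0] using hx0U
    | succ n ih => exact hUγ (mem_thickening_iff.2 ⟨w n, ih, hstep n⟩)
  refine ⟨x 0, _, isTrajectory_iterate hfG _, fun n => ?_⟩
  calc dist (x n) (f^[n] (x 0)) = dist (w n) (x 0) := by rw [← hw n, (hf.iterate n).dist_eq]
    _ < ε := mem_ball.1 (hUε (hwU n))

end GraphOfIsometry

theorem stmt_17_general {X : Type*} [MetricSpace X] [CompactSpace X]
    (G : Set (X × X))
    (f : X → X) (hf : ∀ x y : X, dist (f x) (f y) = dist x y)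
    (hgraph : {p : X × X | p.2 = f p.1} ⊆ G) :
    (MShadowing21 G → TotallyDisconnectedSpace X) ∧
      (TotallyDisconnectedSpace X → MShadowing12 G) := by
  have hiso : Isometry f := Isometry.of_dist_eq hf
  have hfG : ∀ x, (x, f x) ∈ G := fun x => hgraph rfl
  exact ⟨totallyDisconnectedSpace_of_mShadowing21 hiso hfG,
    fun _ => mShadowing12_of_totallyDisconnectedSpace hiso hfG⟩

/-- for a CR-dynamical system on a compact metric space whose relation
contains the graph of an isometry: (2,1)-shadowing implies X totally disconnected,
and X totally disconnected implies (1,2)-shadowing. -/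
theorem stmt_17 {X : Type*} [MetricSpace X] [CompactSpace X] [Nonempty X]
    (G : Set (X × X)) (hGclosed : IsClosed G) (hGne : G.Nonempty)
    (hGpow : ∀ n : ℕ, 1 ≤ n → (relPow G n).Nonempty)
    (f : X → X) (hf : ∀ x y : X, dist (f x) (f y) = dist x y)
    (hgraph : {p : X × X | p.2 = f p.1} ⊆ G) :
    (MShadowing21 G → TotallyDisconnectedSpace X) ∧
      (TotallyDisconnectedSpace X → MShadowing12 G) :=
  stmt_17_general G f hf hgraph
end
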